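/- Let Q be an NQPR in dimension d ≥ 2, and let N⁺ = ((d−1)√(d+1) − 1)/d. The set of density matrices ρ (d×d positive semidefinite matrices with trace 1) for which there exists an index j with Re tr(ρ Q_j) ≤ −N⁺ has exactly d² elements if and only if there exists a SIC Π_1, …, Π_{d²} in dimension d such that Q_j = −√(d+1)·Π_j + ((1 + √(d+1))/d)·I for every j. -/

import Mathlib

open scoped ComplexOrder

/-!
For a Hermitian `Q` with `tr Q = 1` and `tr Q² = d`, let `R = extremalState d Q`, i.e.
`R = (b • 1 - Q) / √(d+1)` with `b = (1 + √(d+1)) / d`, the solution of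
`Q = -√(d+1) • R + b • 1`. Then `tr R = tr R² = 1` and `tr (R Q) = -N⁺`, so a density
matrix `ρ` with `Re tr (ρ Q) ≤ -N⁺` has `Re tr (ρ R) ≥ 1`, and
`tr (ρ - R)² = tr ρ² - 2 Re tr (ρ R) + tr R² ≤ 1 - 2 + 1 = 0` forces `ρ = R`.
Hence the set of such states is the image of `{j | R_j ≥ 0}` under the injective map `j ↦ R_j`,
and it has `d²` elements iff every `R_j` is a state. Then `tr R_j² = 1` makes `R_j` a projector
and `tr (R_j R_k) = (tr (Q_j Q_k) + 1) / (d + 1)` gives the SIC overlaps; conversely the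
projectors of a SIC are states.
-/

namespace Matrix

variable {n : Type*} [Fintype n] {A : Matrix n n ℂ}

section Eigenvalues

variable [DecidableEq n]

lemma IsHermitian.sum_eigenvalues_eq_one (hA : A.IsHermitian) (h1 : A.trace = 1) :
    ∑ i, hA.eigenvalues i = 1 := by
  have : ((∑ i, hA.eigenvalues i : ℝ) : ℂ) = 1 := by
    simpa [h1] using hA.trace_eq_sum_eigenvalues.symm
  exact_mod_cast this

lemma IsHermitian.trace_mul_self (hA : A.IsHermitian) :
    (A * A).trace = ((∑ i, hA.eigenvalues i ^ 2 : ℝ) : ℂ) := by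
  conv_lhs => rw [hA.spectral_theorem, ← map_mul, Unitary.conjStarAlgAut_apply, trace_mul_cycle,
    Unitary.coe_star_mul_self, one_mul, diagonal_mul_diagonal, trace_diagonal]
  simp [sq]

lemma IsHermitian.mul_self_eq_self_of_eigenvalues (hA : A.IsHermitian)
    (h : ∀ i, hA.eigenvalues i ^ 2 = hA.eigenvalues i) : A * A = A := by
  conv_lhs => rw [hA.spectral_theorem, ← map_mul, diagonal_mul_diagonal]
  conv_rhs => rw [hA.spectral_theorem]
  congr 2
  funext i
  simp only [Function.comp_apply, ← sq]
  exact_mod_cast h i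

lemma PosSemidef.eigenvalues_sq_le (hA : A.PosSemidef) (h1 : A.trace = 1) (i : n) :
    hA.1.eigenvalues i ^ 2 ≤ hA.1.eigenvalues i := by
  have hle : hA.1.eigenvalues i ≤ 1 := hA.1.sum_eigenvalues_eq_one h1 ▸
    Finset.single_le_sum (fun j _ ↦ hA.eigenvalues_nonneg j) (Finset.mem_univ i)
  nlinarith [hA.eigenvalues_nonneg i]

lemma PosSemidef.re_trace_mul_self_le_one (hA : A.PosSemidef) (h1 : A.trace = 1) :
    (A * A).trace.re ≤ 1 := by
  rw [hA.1.trace_mul_self, Complex.ofReal_re, ← hA.1.sum_eigenvalues_eq_one h1]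
  exact Finset.sum_le_sum fun i _ ↦ hA.eigenvalues_sq_le h1 i

lemma PosSemidef.mul_self_eq_self_of_trace_mul_self (hA : A.PosSemidef) (h1 : A.trace = 1)
    (h2 : (A * A).trace = 1) : A * A = A := by
  have hsq : ∑ i, hA.1.eigenvalues i ^ 2 = 1 := by
    exact_mod_cast hA.1.trace_mul_self.symm.trans h2
  have hgap : ∑ i, (hA.1.eigenvalues i - hA.1.eigenvalues i ^ 2) = 0 := by
    rw [Finset.sum_sub_distrib, hA.1.sum_eigenvalues_eq_one h1, hsq, sub_self]
  refine hA.1.mul_self_eq_self_of_eigenvalues fun i ↦ le_antisymm (hA.eigenvalues_sq_le h1 i) ?_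
  have := (Finset.sum_eq_zero_iff_of_nonneg fun j _ ↦ sub_nonneg.2 (hA.eigenvalues_sq_le h1 j)).1
    hgap i (Finset.mem_univ i)
  linarith

end Eigenvalues

lemma IsHermitian.eq_zero_of_re_trace_mul_self_nonpos (hA : A.IsHermitian)
    (h : (A * A).trace.re ≤ 0) : A = 0 := by
  have hnonneg := (posSemidef_conjTranspose_mul_self A).trace_nonneg
  rw [hA.eq] at hnonneg
  rw [← trace_conjTranspose_mul_self_eq_zero_iff, hA.eq]
  exact le_antisymm (Complex.le_def.2 ⟨h, (Complex.le_def.1 hnonneg).2.symm⟩) hnonneg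

end Matrix

namespace NQPR

open Matrix

/-- The constant `N⁺` of the paper. -/
noncomputable def maxNegativity (d : ℕ) : ℝ := (((d : ℝ) - 1) * √(d + 1 : ℝ) - 1) / d

noncomputable def extremalState (d : ℕ) (Q : Matrix (Fin d) (Fin d) ℂ) :
    Matrix (Fin d) (Fin d) ℂ :=
  ((√(d + 1 : ℝ) : ℂ))⁻¹ • ((((1 + √(d + 1 : ℝ)) / d : ℝ) : ℂ) • 1 - Q)

variable {d : ℕ} {Q Q' P ρ : Matrix (Fin d) (Fin d) ℂ}

lemma sqrt_natCast_add_one_ne_zero (d : ℕ) : ((√(d + 1 : ℝ) : ℂ)) ≠ 0 := by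
  exact_mod_cast (Real.sqrt_pos.2 (by positivity)).ne'

lemma sq_sqrt_natCast_add_one (d : ℕ) : ((√(d + 1 : ℝ) : ℂ)) ^ 2 = d + 1 := by
  rw [← Complex.ofReal_pow, Real.sq_sqrt (by positivity)]
  push_cast
  rfl

lemma extremalState_eq_iff :
    extremalState d Q = P ↔
      Q = -((√(d + 1 : ℝ) : ℂ)) • P + (((1 + √(d + 1 : ℝ)) / d : ℝ) : ℂ) • 1 := by
  have hs := sqrt_natCast_add_one_ne_zero d
  constructor <;> rintro rfl
  · rw [extremalState, smul_smul, neg_mul, mul_inv_cancel₀ hs, neg_smul, one_smul]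
    abel
  · rw [extremalState, sub_add_cancel_right, neg_smul, neg_neg, smul_smul, inv_mul_cancel₀ hs,
      one_smul]

lemma extremalState_injective : Function.Injective (extremalState d) := fun _ _ h ↦
  (extremalState_eq_iff.1 h).trans (extremalState_eq_iff.1 rfl).symm

lemma isHermitian_extremalState (hQ : Q.IsHermitian) : (extremalState d Q).IsHermitian := by
  unfold extremalState
  exact ((isHermitian_one.smul (Complex.conj_ofReal _)).sub hQ).smul
    (by rw [← Complex.ofReal_inv]; exact Complex.conj_ofReal _)

lemma trace_extremalState_mul (Q ρ : Matrix (Fin d) (Fin d) ℂ) :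
    (extremalState d Q * ρ).trace =
      ((√(d + 1 : ℝ) : ℂ))⁻¹ *
        ((((1 + √(d + 1 : ℝ)) / d : ℝ) : ℂ) * ρ.trace - (Q * ρ).trace) := by
  simp [extremalState, sub_mul, trace_sub, trace_smul]

lemma trace_extremalState (hd : d ≠ 0) (hQ : Q.trace = 1) : (extremalState d Q).trace = 1 := by
  have hs := sqrt_natCast_add_one_ne_zero d
  have := trace_extremalState_mul Q 1
  rw [mul_one, mul_one, trace_one, Fintype.card_fin, hQ] at this
  rw [this]
  push_cast
  field_simp
  ring

lemma trace_extremalState_mul_extremalState (hd : d ≠ 0) (hQ : Q.trace = 1)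
    (hQ' : Q'.trace = 1) :
    (extremalState d Q * extremalState d Q').trace = ((Q * Q').trace + 1) / (d + 1) := by
  have hs := sqrt_natCast_add_one_ne_zero d
  have hs2 := sq_sqrt_natCast_add_one d
  have hd1 : (d : ℂ) + 1 ≠ 0 := hs2 ▸ pow_ne_zero 2 hs
  rw [trace_extremalState_mul, trace_extremalState hd hQ', trace_mul_comm,
    trace_extremalState_mul, hQ, trace_mul_comm]
  push_cast
  field_simp
  linear_combination (1 - d * (Q * Q').trace) * hs2

lemma trace_extremalState_mul_self_eq_one (hd : d ≠ 0) (hQ : Q.trace = 1)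
    (hQ2 : (Q * Q).trace = d) : (extremalState d Q * extremalState d Q).trace = 1 := by
  rw [trace_extremalState_mul_extremalState hd hQ hQ, hQ2, div_self]
  exact_mod_cast d.succ_ne_zero

lemma trace_extremalState_mul_eq_neg_maxNegativity (hd : d ≠ 0) (hQ : Q.trace = 1)
    (hQ2 : (Q * Q).trace = d) : (extremalState d Q * Q).trace = -maxNegativity d := by
  have hs := sqrt_natCast_add_one_ne_zero d
  have hs2 := sq_sqrt_natCast_add_one d
  rw [trace_extremalState_mul, hQ, hQ2, maxNegativity]
  push_cast
  field_simp
  linear_combination (d - 1 : ℂ) * hs2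

lemma eq_extremalState_of_re_trace_mul_le (hd : d ≠ 0) (hQ : Q.IsHermitian) (hQ1 : Q.trace = 1)
    (hQ2 : (Q * Q).trace = d) (hρ : ρ.PosSemidef) (hρ1 : ρ.trace = 1)
    (hle : (ρ * Q).trace.re ≤ -maxNegativity d) : ρ = extremalState d Q := by
  have hRR := trace_extremalState_mul_self_eq_one hd hQ1 hQ2
  have hRQ := congrArg Complex.re (trace_extremalState_mul_eq_neg_maxNegativity hd hQ1 hQ2)
  rw [Complex.neg_re, Complex.ofReal_re] at hRQ
  set R := extremalState d Q
  have hRρ : 1 ≤ (R * ρ).trace.re := by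
    calc 1 = (R * R).trace.re := by rw [hRR, Complex.one_re]
      _ ≤ (R * ρ).trace.re := by
        rw [trace_extremalState_mul, trace_extremalState_mul, trace_extremalState hd hQ1, hρ1,
          ← Complex.ofReal_inv, Complex.re_ofReal_mul, Complex.re_ofReal_mul, Complex.sub_re,
          Complex.sub_re, trace_mul_comm Q, trace_mul_comm Q]
        exact mul_le_mul_of_nonneg_left (by linarith) (by positivity)
  have hρρ := hρ.re_trace_mul_self_le_one hρ1
  have hexpand : ((ρ - R) * (ρ - R)).trace =
      (ρ * ρ).trace - (R * ρ).trace - (R * ρ).trace + (R * R).trace := by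
    rw [sub_mul, mul_sub, mul_sub, trace_sub, trace_sub, trace_sub, trace_mul_comm ρ R]
    ring
  have hdiff := hρ.1.sub (isHermitian_extremalState hQ)
  refine sub_eq_zero.1 <| hdiff.eq_zero_of_re_trace_mul_self_nonpos ?_
  rw [hexpand, hRR]
  simp only [Complex.add_re, Complex.sub_re, Complex.one_re]
  linarith

section Family

variable {ι : Type*} {Q : ι → Matrix (Fin d) (Fin d) ℂ}

lemma injective_of_trace_mul_eq_ite [DecidableEq ι] (hd : d ≠ 0)
    (hpair : ∀ j k, (Q j * Q k).trace = if j = k then (d : ℂ) else 0) :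
    Function.Injective Q := by
  intro j k h
  by_contra hjk
  have := hpair j k
  rw [h, hpair k k, if_pos rfl, if_neg hjk] at this
  exact hd (by exact_mod_cast this)

lemma setOf_re_trace_mul_le_eq_image (hd : d ≠ 0) (hherm : ∀ j, (Q j).IsHermitian)
    (htr : ∀ j, (Q j).trace = 1) (hsq : ∀ j, (Q j * Q j).trace = d) :
    {ρ : Matrix (Fin d) (Fin d) ℂ | ρ.PosSemidef ∧ ρ.trace = 1 ∧
        ∃ j, ((ρ * Q j).trace).re ≤ -maxNegativity d} =
      extremalState d ∘ Q '' {j | (extremalState d (Q j)).PosSemidef} := by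
  ext ρ
  constructor
  · rintro ⟨hρ, hρ1, j, hle⟩
    obtain rfl := eq_extremalState_of_re_trace_mul_le hd (hherm j) (htr j) (hsq j) hρ hρ1 hle
    exact ⟨j, hρ, rfl⟩
  · rintro ⟨j, hj, rfl⟩
    refine ⟨hj, trace_extremalState hd (htr j), j, ?_⟩
    rw [Function.comp_apply, trace_extremalState_mul_eq_neg_maxNegativity hd (htr j) (hsq j),
      Complex.neg_re, Complex.ofReal_re]

end Family

end NQPR

open NQPR in
theorem stmt_7_general (d : ℕ) (hd : 2 ≤ d)
    (Q : Fin (d ^ 2) → Matrix (Fin d) (Fin d) ℂ)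
    (hherm : ∀ j, (Q j).IsHermitian)
    (htr : ∀ j, (Q j).trace = 1)
    (hpair : ∀ j k, (Q j * Q k).trace = if j = k then (d : ℂ) else 0) :
    {ρ : Matrix (Fin d) (Fin d) ℂ | ρ.PosSemidef ∧ ρ.trace = 1 ∧
        ∃ j, ((ρ * Q j).trace).re ≤
          -((((d : ℝ) - 1) * Real.sqrt (d + 1) - 1) / d)}.ncard = d ^ 2 ↔
      ∃ P : Fin (d ^ 2) → Matrix (Fin d) (Fin d) ℂ,
        (∀ j, (P j).IsHermitian) ∧
        (∀ j, P j * P j = P j) ∧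
        (∀ j, (P j).trace = 1) ∧
        (∀ j k, (P j * P k).trace =
          ((d : ℂ) * (if j = k then 1 else 0) + 1) / ((d : ℂ) + 1)) ∧
        (∀ j, Q j = -((Real.sqrt (d + 1) : ℂ)) • P j +
          (((1 + Real.sqrt (d + 1)) / d : ℝ) : ℂ) • (1 : Matrix (Fin d) (Fin d) ℂ)) := by
  have hd0 : d ≠ 0 := by omega
  have hsq j : (Q j * Q j).trace = d := by simpa using hpair j j
  have hinj := extremalState_injective.comp (injective_of_trace_mul_eq_ite hd0 hpair)
  have hcard (s : Set (Fin (d ^ 2))) : s.ncard = d ^ 2 ↔ ∀ j, j ∈ s := by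
    rw [← Set.eq_univ_iff_forall, Set.eq_univ_iff_ncard, Nat.card_fin]
  rw [← maxNegativity, setOf_re_trace_mul_le_eq_image hd0 hherm htr hsq,
    Set.ncard_image_of_injective _ hinj, hcard]
  constructor
  · intro hpsd
    refine ⟨extremalState d ∘ Q, fun j ↦ (hpsd j).1, fun j ↦ ?_,
      fun j ↦ trace_extremalState hd0 (htr j), fun j k ↦ ?_,
      fun j ↦ extremalState_eq_iff.1 rfl⟩
    · exact (hpsd j).mul_self_eq_self_of_trace_mul_self (trace_extremalState hd0 (htr j))
        (trace_extremalState_mul_self_eq_one hd0 (htr j) (hsq j))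
    · rw [Function.comp_apply, Function.comp_apply,
        trace_extremalState_mul_extremalState hd0 (htr j) (htr k), hpair]
      split_ifs <;> simp
  · rintro ⟨P, hPherm, hPidem, -, -, hQP⟩ j
    rw [Set.mem_ofPred_eq, extremalState_eq_iff.2 (hQP j), ← hPidem j]
    nth_rewrite 1 [← (hPherm j).eq]
    exact Matrix.posSemidef_conjTranspose_mul_self _

/-- For an NQPR `Q` in dimension `d ≥ 2`, with `N⁺ = ((d−1)√(d+1) − 1)/d`, the set
of density matrices `ρ` for which some `j` satisfies `Re tr(ρ Q j) ≤ −N⁺` has exactly `d²`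
elements iff there is a SIC `Π` such that `Q j = −√(d+1)·Π j + ((1 + √(d+1))/d)·I` for all `j`. -/
theorem stmt_7 (d : ℕ) (hd : 2 ≤ d)
    (Q : Fin (d ^ 2) → Matrix (Fin d) (Fin d) ℂ)
    (hherm : ∀ j, (Q j).IsHermitian)
    (htr : ∀ j, (Q j).trace = 1)
    (hpair : ∀ j k, (Q j * Q k).trace = if j = k then (d : ℂ) else 0)
    (hsum : ∑ j, Q j = (d : ℂ) • (1 : Matrix (Fin d) (Fin d) ℂ)) :
    {ρ : Matrix (Fin d) (Fin d) ℂ | ρ.PosSemidef ∧ ρ.trace = 1 ∧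
        ∃ j, ((ρ * Q j).trace).re ≤
          -((((d : ℝ) - 1) * Real.sqrt (d + 1) - 1) / d)}.ncard = d ^ 2 ↔
      ∃ P : Fin (d ^ 2) → Matrix (Fin d) (Fin d) ℂ,
        (∀ j, (P j).IsHermitian) ∧
        (∀ j, P j * P j = P j) ∧
        (∀ j, (P j).trace = 1) ∧
        (∀ j k, (P j * P k).trace =
          ((d : ℂ) * (if j = k then 1 else 0) + 1) / ((d : ℂ) + 1)) ∧
        (∀ j, Q j = -((Real.sqrt (d + 1) : ℂ)) • P j +
          (((1 + Real.sqrt (d + 1)) / d : ℝ) : ℂ) • (1 : Matrix (Fin d) (Fin d) ℂ)) :=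
  stmt_7_general d hd Q hherm htr hpair
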